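/- Let μ be the probability measure on ℝ₊ = [0,∞) with density x ↦ e^{-x} with respect to Lebesgue measure, and let f : ℝ₊ → ℝ₊ be a bounded non-decreasing function. Then Ent_μ f ≤ ∫_{ℝ₊} f(x)·(x − 1) dμ(x). -/

import Mathlib

/-!
Extend `f` to a monotone `g` on `ℝ`, and let `h x = e^{-x} g x` and `S x = ∫_x^∞ h`.
Monotonicity gives `h x ≤ g x ∫_x^∞ e^{-t} dt ≤ S x`, that is `log g x ≤ x + log S x`.
Integrate this against `h`: the term `∫_0^∞ h log S` equals `S 0 log S 0 - S 0`, because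
`S - S log S` is a primitive of `h log S` away from the countably many jumps of `g`.
Since `∫_0^∞ h = S 0 = ∫ f dμ`, the result is the claimed bound.
-/

open MeasureTheory Real Set

/-- Entropy of a nonnegative function `f` w.r.t. a measure `μ`
(with the convention `0 · ln 0 = 0`, via `Real.log 0 = 0`). -/
noncomputable def entropy {X : Type*} [MeasurableSpace X] (μ : MeasureTheory.Measure X)
    (f : X → ℝ) : ℝ :=
  (∫ x, f x * Real.log (f x) ∂μ) - (∫ x, f x ∂μ) * Real.log (∫ x, f x ∂μ)

open Filter Topology

lemma integral_withDensity_ofReal {X : Type*} [MeasurableSpace X] {μ : Measure X} {ρ : X → ℝ}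
    (hρ : Measurable ρ) (hρ0 : ∀ᵐ x ∂μ, 0 ≤ ρ x) (ψ : X → ℝ) :
    ∫ x, ψ x ∂μ.withDensity (fun x => ENNReal.ofReal (ρ x)) = ∫ x, ρ x * ψ x ∂μ := by
  rw [integral_withDensity_eq_integral_toReal_smul (f := fun x => ENNReal.ofReal (ρ x))
    hρ.ennreal_ofReal (ae_of_all _ fun _ => ENNReal.ofReal_lt_top)]
  exact integral_congr_ae (hρ0.mono fun x hx => by simp [ENNReal.toReal_ofReal hx])

lemma entropy_congr_ae {X : Type*} [MeasurableSpace X] {μ : Measure X} {f g : X → ℝ}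
    (hfg : f =ᵐ[μ] g) : entropy μ f = entropy μ g := by
  rw [entropy, entropy, integral_congr_ae hfg,
    integral_congr_ae (hfg.mono fun x hx => by rw [hx])]

lemma integral_Ioi_of_hasDerivAt_off_countable_of_tendsto {E : Type*} [NormedAddCommGroup E]
    [NormedSpace ℝ E] [CompleteSpace E] {F F' : ℝ → E} {a : ℝ} {m : E} {s : Set ℝ}
    (hs : s.Countable) (hcont : ContinuousOn F (Ici a))
    (hderiv : ∀ x ∈ Ioi a \ s, HasDerivAt F (F' x) x) (hint : IntegrableOn F' (Ioi a))
    (hlim : Tendsto F atTop (𝓝 m)) : ∫ x in Ioi a, F' x = m - F a := by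
  refine tendsto_nhds_unique (intervalIntegral_tendsto_integral_Ioi a hint tendsto_id)
    ((hlim.sub_const (F a)).congr' ?_)
  filter_upwards [eventually_ge_atTop a] with b hab
  exact (integral_eq_of_hasDerivAt_off_countable_of_le F F' hab hs
    (hcont.mono Icc_subset_Ici_self) (fun x hx => hderiv x ⟨hx.1.1, hx.2⟩)
    ((intervalIntegrable_iff_integrableOn_Ioc_of_le hab).2
      (hint.mono_set Ioc_subset_Ioi_self))).symm

noncomputable def tailIntegral (h : ℝ → ℝ) (x : ℝ) : ℝ := ∫ t in Ioi x, h t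

section TailIntegral

variable {h : ℝ → ℝ}

lemma tailIntegral_eq_intervalIntegral_add {a b : ℝ} (hint : IntegrableOn h (Ioi a))
    (hab : a ≤ b) : tailIntegral h a = (∫ t in a..b, h t) + tailIntegral h b := by
  rw [tailIntegral, tailIntegral, intervalIntegral.integral_of_le hab,
    ← setIntegral_union (Ioc_disjoint_Ioi le_rfl) measurableSet_Ioi
      (hint.mono_set Ioc_subset_Ioi_self) (hint.mono_set (Ioi_subset_Ioi hab)),
    Ioc_union_Ioi_eq_Ioi hab]

lemma tailIntegral_eq_sub_intervalIntegral (hint : ∀ b, IntegrableOn h (Ioi b)) (a x : ℝ) :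
    tailIntegral h x = tailIntegral h a - ∫ t in a..x, h t := by
  rcases le_total a x with hax | hxa
  · rw [tailIntegral_eq_intervalIntegral_add (hint a) hax]; ring
  · rw [tailIntegral_eq_intervalIntegral_add (hint x) hxa, intervalIntegral.integral_symm]; ring

lemma intervalIntegrable_of_forall_integrableOn_Ioi (hint : ∀ b, IntegrableOn h (Ioi b))
    (a b : ℝ) : IntervalIntegrable h volume a b :=
  ((hint (min a b - 1)).mono_set fun _ hx => by
    simp only [mem_Ioi]; linarith [hx.1]).intervalIntegrable

lemma continuous_tailIntegral (hint : ∀ b, IntegrableOn h (Ioi b)) :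
    Continuous (tailIntegral h) := by
  rw [funext (tailIntegral_eq_sub_intervalIntegral hint 0)]
  exact continuous_const.sub
    (intervalIntegral.continuous_primitive (intervalIntegrable_of_forall_integrableOn_Ioi hint) 0)

lemma hasDerivAt_tailIntegral (hint : ∀ b, IntegrableOn h (Ioi b)) {x : ℝ}
    (hx : ContinuousAt h x) : HasDerivAt (tailIntegral h) (-h x) x := by
  rw [funext (tailIntegral_eq_sub_intervalIntegral hint (x - 1))]
  exact (intervalIntegral.integral_hasDerivAt_right
    (intervalIntegrable_of_forall_integrableOn_Ioi hint _ _)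
    ⟨Ioi (x - 1), Ioi_mem_nhds (sub_one_lt x), (hint _).aestronglyMeasurable⟩ hx).const_sub _

lemma tendsto_tailIntegral_atTop {a : ℝ} (hint : IntegrableOn h (Ioi a)) :
    Tendsto (tailIntegral h) atTop (𝓝 0) := by
  have hlim := (intervalIntegral_tendsto_integral_Ioi a hint tendsto_id).const_sub
    (tailIntegral h a)
  rw [show tailIntegral h a - ∫ t in Ioi a, h t = 0 from sub_self _] at hlim
  refine hlim.congr' ?_
  filter_upwards [eventually_ge_atTop a] with x hx
  rw [tailIntegral_eq_intervalIntegral_add hint hx, id]; ring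

lemma antitone_tailIntegral (h0 : ∀ x, 0 ≤ h x) (hint : ∀ b, IntegrableOn h (Ioi b)) :
    Antitone (tailIntegral h) := fun a _ hab =>
  setIntegral_mono_set (hint a) (ae_of_all _ h0) (Ioi_subset_Ioi hab).eventuallyLE

lemma integral_mul_log_tailIntegral {a : ℝ} {s : Set ℝ}
    (hint : ∀ b, IntegrableOn h (Ioi b)) (hs : s.Countable) (hcont : ∀ x ∉ s, ContinuousAt h x)
    (hpos : ∀ x ∈ Ioi a, tailIntegral h x ≠ 0)
    (hlog : IntegrableOn (fun x => h x * log (tailIntegral h x)) (Ioi a)) :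
    ∫ x in Ioi a, h x * log (tailIntegral h x) =
      tailIntegral h a * log (tailIntegral h a) - tailIntegral h a := by
  set S := tailIntegral h
  have hΦ : Continuous fun u : ℝ => u - u * log u := continuous_id.sub continuous_mul_log
  have hderiv : ∀ x ∈ Ioi a \ s,
      HasDerivAt (fun y => S y - S y * log (S y)) (h x * log (S x)) x := by
    rintro x ⟨hxa, hxs⟩
    have hS := hasDerivAt_tailIntegral hint (hcont x hxs)
    exact (hS.sub ((hasDerivAt_mul_log (hpos x hxa)).comp x hS)).congr_deriv (by ring)
  have hlim : Tendsto (fun y => S y - S y * log (S y)) atTop (𝓝 0) := by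
    simpa [Function.comp_def] using (hΦ.tendsto 0).comp (tendsto_tailIntegral_atTop (hint a))
  rw [integral_Ioi_of_hasDerivAt_off_countable_of_tendsto hs
    (hΦ.comp (continuous_tailIntegral hint)).continuousOn hderiv hlog hlim]
  simp only [Function.comp_apply]; ring

end TailIntegral

section ExponentialWeight

variable {g : ℝ → ℝ} {C : ℝ}

lemma integrableOn_exp_neg_mul {a : ℝ} (hgm : AEStronglyMeasurable g (volume.restrict (Ioi a)))
    (hgC : ∀ x, |g x| ≤ C) : IntegrableOn (fun x => exp (-x) * g x) (Ioi a) :=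
  (integrableOn_exp_neg_Ioi a).mul_bdd hgm (ae_of_all _ hgC)

lemma integrableOn_exp_neg_mul_mul_id (hgm : AEStronglyMeasurable g (volume.restrict (Ioi 0)))
    (hgC : ∀ x, |g x| ≤ C) : IntegrableOn (fun x => exp (-x) * (g x * x)) (Ioi 0) := by
  have hΓ : IntegrableOn (fun x => exp (-x) * x) (Ioi 0) := by
    simpa [show (2 : ℝ) - 1 = 1 by norm_num] using GammaIntegral_convergent (s := 2) two_pos
  exact IntegrableOn.congr_fun (hΓ.mul_bdd hgm (ae_of_all _ hgC)) (fun x _ => by ring)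
    measurableSet_Ioi

lemma integrableOn_exp_neg_mul_mul_log {a : ℝ}
    (hgm : AEStronglyMeasurable g (volume.restrict (Ioi a))) (hgC : ∀ x, |g x| ≤ C) :
    IntegrableOn (fun x => exp (-x) * (g x * log (g x))) (Ioi a) := by
  obtain ⟨K, hK⟩ := isCompact_Icc.exists_bound_of_continuousOn
    (s := Icc (-C) C) continuous_mul_log.continuousOn
  exact integrableOn_exp_neg_mul (continuous_mul_log.comp_aestronglyMeasurable hgm)
    fun x => hK (g x) (abs_le.1 (hgC x))

lemma exp_neg_mul_le_tailIntegral (hg : Monotone g) {x : ℝ}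
    (hint : IntegrableOn (fun t => exp (-t) * g t) (Ioi x)) :
    exp (-x) * g x ≤ tailIntegral (fun t => exp (-t) * g t) x :=
  calc exp (-x) * g x = ∫ t in Ioi x, exp (-t) * g x := by
        rw [integral_mul_const, integral_exp_neg_Ioi]
    _ ≤ _ := setIntegral_mono_on ((integrableOn_exp_neg_Ioi x).mul_const _) hint
        measurableSet_Ioi fun t ht => mul_le_mul_of_nonneg_left (hg ht.out.le) (exp_pos _).le

lemma tailIntegral_exp_neg_mul_pos (hg : Monotone g) (hg0 : ∀ x, 0 ≤ g x)
    (hint : ∀ b, IntegrableOn (fun t => exp (-t) * g t) (Ioi b)) {y : ℝ} (hy : 0 < g y)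
    (x : ℝ) : 0 < tailIntegral (fun t => exp (-t) * g t) x :=
  calc 0 < exp (-max x y) * g (max x y) :=
        mul_pos (exp_pos _) (hy.trans_le (hg (le_max_right x y)))
    _ ≤ tailIntegral (fun t => exp (-t) * g t) (max x y) := exp_neg_mul_le_tailIntegral hg (hint _)
    _ ≤ tailIntegral (fun t => exp (-t) * g t) x :=
        antitone_tailIntegral (fun t => mul_nonneg (exp_pos _).le (hg0 t)) hint (le_max_left x y)

lemma exp_neg_mul_mul_log_le (hg : Monotone g) (hg0 : ∀ x, 0 ≤ g x) {x : ℝ}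
    (hint : IntegrableOn (fun t => exp (-t) * g t) (Ioi x)) :
    exp (-x) * (g x * log (g x)) ≤
      exp (-x) * g x * (x + log (tailIntegral (fun t => exp (-t) * g t) x)) := by
  rcases (hg0 x).eq_or_lt with hx | hx
  · simp [← hx]
  have hlog := log_le_log (mul_pos (exp_pos _) hx) (exp_neg_mul_le_tailIntegral hg hint)
  rw [log_mul (exp_pos _).ne' hx.ne', log_exp] at hlog
  rw [← mul_assoc]
  exact mul_le_mul_of_nonneg_left (by linarith) (mul_pos (exp_pos _) hx).le

lemma integrableOn_exp_neg_mul_log_tailIntegral (hg : Monotone g) (hg0 : ∀ x, 0 ≤ g x)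
    (hgC : ∀ x, |g x| ≤ C) (hpos : ∀ x, 0 < tailIntegral (fun t => exp (-t) * g t) x) :
    IntegrableOn (fun x => exp (-x) * g x * log (tailIntegral (fun t => exp (-t) * g t) x))
      (Ioi 0) := by
  set S := tailIntegral fun t => exp (-t) * g t
  have hgm := hg.measurable.aestronglyMeasurable (μ := volume.restrict (Ioi 0))
  have hint b := integrableOn_exp_neg_mul hg.measurable.aestronglyMeasurable hgC (a := b)
  refine integrable_of_le_of_le
    (g₁ := fun x => exp (-x) * (g x * log (g x)) - exp (-x) * (g x * x))
    (g₂ := fun x => exp (-x) * g x * log (S 0)) ?_ ?_ ?_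
    ((integrableOn_exp_neg_mul_mul_log hgm hgC).sub (integrableOn_exp_neg_mul_mul_id hgm hgC))
    ((hint 0).mul_const _)
  · exact ((continuous_exp.comp continuous_neg).measurable.mul hg.measurable).mul
      (continuous_tailIntegral hint).measurable.log |>.aestronglyMeasurable
  · refine ae_of_all _ fun x => ?_
    dsimp only
    linarith [exp_neg_mul_mul_log_le hg hg0 (hint x)]
  · refine ae_restrict_of_forall_mem measurableSet_Ioi fun x hx => ?_
    exact mul_le_mul_of_nonneg_left
      (log_le_log (hpos x) (antitone_tailIntegral (fun t => mul_nonneg (exp_pos _).le (hg0 t))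
        hint hx.out.le))
      (mul_nonneg (exp_pos _).le (hg0 x))

end ExponentialWeight

lemma integral_exp_neg_mul_mul_log_sub_le {g : ℝ → ℝ} {C : ℝ} (hg : Monotone g)
    (hg0 : ∀ x, 0 ≤ g x) (hgC : ∀ x, g x ≤ C) :
    (∫ x in Ioi 0, exp (-x) * (g x * log (g x))) -
        (∫ x in Ioi 0, exp (-x) * g x) * log (∫ x in Ioi 0, exp (-x) * g x) ≤
      ∫ x in Ioi 0, exp (-x) * (g x * (x - 1)) := by
  by_cases hzero : ∀ y, g y = 0
  · simp [hzero]
  obtain ⟨y, hy⟩ := not_forall.1 hzero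
  have hgC' x : |g x| ≤ C := (abs_of_nonneg (hg0 x)).trans_le (hgC x)
  have hgm := hg.measurable.aestronglyMeasurable (μ := volume.restrict (Ioi 0))
  have hint b := integrableOn_exp_neg_mul hg.measurable.aestronglyMeasurable hgC' (a := b)
  set S := tailIntegral fun t => exp (-t) * g t
  have hpos : ∀ x, 0 < S x := tailIntegral_exp_neg_mul_pos hg hg0 hint ((hg0 y).lt_of_ne' hy)
  have hlogS := integrableOn_exp_neg_mul_log_tailIntegral hg hg0 hgC' hpos
  have hid : ∫ x in Ioi 0, exp (-x) * g x * log (S x) = S 0 * log (S 0) - S 0 :=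
    integral_mul_log_tailIntegral hint hg.countable_not_continuousAt
      (fun x hx => (continuous_exp.comp continuous_neg).continuousAt.mul (not_not.1 hx))
      (fun x _ => (hpos x).ne') hlogS
  have hsplit : ∫ x in Ioi 0, exp (-x) * (g x * (x - 1)) =
      (∫ x in Ioi 0, exp (-x) * (g x * x)) - S 0 := by
    rw [show S 0 = ∫ x in Ioi 0, exp (-x) * g x from rfl,
      ← integral_sub (integrableOn_exp_neg_mul_mul_id hgm hgC') (hint 0)]
    exact setIntegral_congr_fun measurableSet_Ioi fun x _ => by ring
  calc _ ≤ (∫ x in Ioi 0, exp (-x) * (g x * x) + exp (-x) * g x * log (S x)) -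
        S 0 * log (S 0) :=
        sub_le_sub_right (setIntegral_mono_on (integrableOn_exp_neg_mul_mul_log hgm hgC')
          ((integrableOn_exp_neg_mul_mul_id hgm hgC').add hlogS) measurableSet_Ioi
          fun x _ => by
            simp only [Pi.add_apply]; linarith [exp_neg_mul_mul_log_le hg hg0 (hint x)]) _
    _ = _ := by
        rw [integral_add (integrableOn_exp_neg_mul_mul_id hgm hgC') hlogS, hid, hsplit]
        ring

theorem entropy_le_integral_exponential_radial
    (μ : Measure ℝ)
    (hμ : μ = (volume.restrict (Set.Ici (0 : ℝ))).withDensity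
      fun x => ENNReal.ofReal (Real.exp (-x)))
    (f : ℝ → ℝ)
    (hf_nonneg : ∀ x ∈ Set.Ici (0 : ℝ), 0 ≤ f x)
    (hf_mono : MonotoneOn f (Set.Ici (0 : ℝ)))
    (hf_bdd : ∃ C : ℝ, ∀ x ∈ Set.Ici (0 : ℝ), f x ≤ C) :
    entropy μ f ≤ ∫ x, f x * (x - 1) ∂μ := by
  obtain ⟨C, hC⟩ := hf_bdd
  set g : ℝ → ℝ := fun x => f (max x 0)
  have hg : Monotone g := fun x y hxy =>
    hf_mono (le_max_right x 0) (le_max_right y 0) (max_le_max hxy le_rfl)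
  have hfg : f =ᵐ[μ] g := by
    subst hμ
    refine (withDensity_absolutelyContinuous _ _).ae_le
      (ae_restrict_of_forall_mem measurableSet_Ici fun x hx => ?_)
    simp [g, max_eq_left hx.out]
  rw [entropy_congr_ae hfg, integral_congr_ae (hfg.mono fun x hx => by rw [hx]), hμ]
  simp only [entropy, integral_withDensity_ofReal (ρ := fun x => exp (-x)) (by fun_prop)
    (ae_of_all _ fun x => (exp_pos (-x)).le), integral_Ici_eq_integral_Ioi]
  exact integral_exp_neg_mul_mul_log_sub_le hg (fun x => hf_nonneg _ (le_max_right x 0))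
    (fun x => hC _ (le_max_right x 0))
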